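/- arXiv:1008.3190 — 2 statements merged into one kernel-verified Lean document; each statement's English description precedes it below -/
import Mathlib

section
/- For every integer d ≥ 2 and every tree T with ℓ ≥ 2 leaves, the minimum number of subtrees of T, each having at most d leaves, needed to cover the edge set of T is exactly ⌈ℓ/d⌉. -/
/-!
Root the tree at a leaf `r` and list the `ℓ` leaves in depth-first order, i.e. by the
lexicographic order of their paths from `r`. Then `r` comes first, and for every edge the leaves
below it form an interval of indices avoiding `0`. With `k = ⌈ℓ/d⌉`, group the indices by their
residue modulo `k`, adding the root to every class with fewer than `d` elements; the union of the
paths between the members of a group is a subtree whose leaves lie in the group. An edge is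
covered as soon as some group has members on both sides of it. A residue class meeting the
interval below the edge either leaves it, or is small, so that its group contains the root, or is
full and lies inside the interval; in the last case the interval contains `i < k ≤ i + k`, hence
`k`, and the class of `0` straddles the edge.

Conversely, a leaf of the tree is a leaf of every subtree containing its edge, so `k` subtrees
with at most `d` leaves each cover at most `k * d` leaves.
-/

open Finset

theorem List.IsPrefix.of_lt_of_lt {α : Type*} [LinearOrder α] {q s t u : List α}
    (hs : q <+: s) (hu : q <+: u) (hst : s < t) (htu : t < u) : q <+: t := by
  induction q generalizing s t u with
  | nil => exact List.nil_prefix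
  | cons a q ih =>
    obtain ⟨s, rfl, hqs⟩ : ∃ s', s = a :: s' ∧ q <+: s' := by
      rcases s with _ | ⟨b, s⟩
      · exact absurd hs.length_le (by simp)
      · obtain ⟨rfl, h⟩ := List.cons_prefix_cons.1 hs
        exact ⟨s, rfl, h⟩
    obtain ⟨u, rfl, hqu⟩ : ∃ u', u = a :: u' ∧ q <+: u' := by
      rcases u with _ | ⟨b, u⟩
      · exact absurd hu.length_le (by simp)
      · obtain ⟨rfl, h⟩ := List.cons_prefix_cons.1 hu
        exact ⟨u, rfl, h⟩
    rcases t with _ | ⟨c, t⟩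
    · exact absurd hst (List.not_lt_nil _)
    rw [List.cons_lt_cons_iff] at hst htu
    obtain rfl : c = a := by
      rcases hst with h | ⟨rfl, _⟩ <;> rcases htu with h' | ⟨h', _⟩ <;> order
    exact List.cons_prefix_cons.2 ⟨rfl, ih hqs hqu (by simpa using hst) (by simpa using htu)⟩

theorem StrictMonoOn.ordConnected_setOf_isPrefix {α β : Type*} [LinearOrder α]
    [PartialOrder β] {s : Set β} {κ : β → List α} (hκ : StrictMonoOn κ s)
    (hs : s.OrdConnected) (q : List α) : {j | j ∈ s ∧ q <+: κ j}.OrdConnected := by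
  refine ⟨fun a ha b hb j hj => ⟨hs.out ha.1 hb.1 hj, ?_⟩⟩
  have hjs := hs.out ha.1 hb.1 hj
  rcases eq_or_lt_of_le hj.1 with rfl | haj
  · exact ha.2
  rcases eq_or_lt_of_le hj.2 with rfl | hjb
  · exact hb.2
  exact ha.2.of_lt_of_lt hb.2 (hκ ha.1 hjs haj) (hκ hjs hb.1 hjb)

theorem Finset.exists_surjOn_strictMonoOn_comp {α β : Type*} [LinearOrder β] [Nonempty α]
    (s : Finset α) (g : α → β) (hg : Set.InjOn g s) :
    ∃ f : ℕ → α, Set.SurjOn f (Set.Iio #s) s ∧ StrictMonoOn (g ∘ f) (Set.Iio #s) := by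
  classical
  set e := (s.image g).orderEmbOfFin (card_image_of_injOn hg)
  choose x hxs hx using fun j =>
    mem_image.1 ((s.image g).orderEmbOfFin_mem (card_image_of_injOn hg) j)
  refine ⟨fun j => if h : j < #s then x ⟨j, h⟩ else Classical.arbitrary α, ?_, ?_⟩
  · intro y hy
    obtain ⟨j, hj⟩ : g y ∈ Set.range e := by
      rw [range_orderEmbOfFin]
      exact mem_image_of_mem g hy
    exact ⟨j, j.2, by simpa [j.2] using hg (hxs j) hy ((hx j).trans hj)⟩
  · intro i (hi : i < #s) j (hj : j < #s) hij
    simp only [Function.comp_apply, dif_pos hi, dif_pos hj, hx]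
    exact e.strictMono (show (⟨i, hi⟩ : Fin #s) < ⟨j, hj⟩ from hij)

def residueClass (ℓ k i : ℕ) : Finset ℕ := {j ∈ range ℓ | j % k = i}

def residueGroup (ℓ k d i : ℕ) : Finset ℕ :=
  if #(residueClass ℓ k i) < d then insert 0 (residueClass ℓ k i) else residueClass ℓ k i

section ResidueGroup

variable {ℓ k d i : ℕ}

@[simp]
theorem mem_residueClass {j : ℕ} : j ∈ residueClass ℓ k i ↔ j < ℓ ∧ j % k = i := by
  simp [residueClass]

theorem card_residueClass_le (h : ℓ ≤ k * d) : #(residueClass ℓ k i) ≤ d := by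
  have hmaps : Set.MapsTo (· / k) (residueClass ℓ k i) (range d) := fun j hj => by
    rw [mem_coe, mem_residueClass] at hj
    simpa using Nat.div_lt_of_lt_mul (hj.1.trans_le h)
  have hinj : Set.InjOn (· / k) (residueClass ℓ k i) := fun j₁ hj₁ j₂ hj₂ hq => by
    rw [mem_coe, mem_residueClass] at hj₁ hj₂
    have h₁ := Nat.div_add_mod j₁ k
    have h₂ := Nat.div_add_mod j₂ k
    simp only at hq
    rw [hq, hj₁.2] at h₁
    omega
  simpa using card_le_card_of_injOn _ hmaps hinj

theorem card_residueGroup_le (h : ℓ ≤ k * d) : #(residueGroup ℓ k d i) ≤ d := by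
  unfold residueGroup
  split_ifs with hc
  · exact (card_insert_le _ _).trans hc
  · exact card_residueClass_le h

theorem residueClass_subset_residueGroup : residueClass ℓ k i ⊆ residueGroup ℓ k d i := by
  unfold residueGroup
  split_ifs
  exacts [subset_insert _ _, subset_rfl]

theorem residueGroup_nonempty (hd : 0 < d) : (residueGroup ℓ k d i).Nonempty := by
  unfold residueGroup
  split_ifs with hc
  · exact insert_nonempty _ _
  · exact card_pos.1 (by omega)

theorem lt_of_mem_residueGroup (hℓ : 0 < ℓ) {j : ℕ} (hj : j ∈ residueGroup ℓ k d i) : j < ℓ := by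
  unfold residueGroup at hj
  split_ifs at hj <;> simp at hj <;> omega

theorem exists_residueGroup_mem_not_mem (hd : 2 ≤ d) (hk : 0 < k) {J : Set ℕ}
    (hJ : J.OrdConnected) (hJℓ : J ⊆ Set.Iio ℓ) (h0 : 0 ∉ J) (hne : J.Nonempty) :
    ∃ i < k, ∃ a ∈ residueGroup ℓ k d i, ∃ b ∈ residueGroup ℓ k d i, a ∈ J ∧ b ∉ J := by
  obtain ⟨a, ha⟩ := hne
  have haℓ : a < ℓ := hJℓ ha
  have hac : a ∈ residueClass ℓ k (a % k) := by simp [haℓ]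
  by_cases hsmall : #(residueClass ℓ k (a % k)) < d
  · refine ⟨a % k, Nat.mod_lt _ hk, a, residueClass_subset_residueGroup hac, 0, ?_, ha, h0⟩
    simp [residueGroup, hsmall]
  by_cases hout : ∃ b ∈ residueClass ℓ k (a % k), b ∉ J
  · obtain ⟨b, hb, hbJ⟩ := hout
    exact ⟨a % k, Nat.mod_lt _ hk, a, residueClass_subset_residueGroup hac, b,
      residueClass_subset_residueGroup hb, ha, hbJ⟩
  simp only [not_exists, not_and, not_not] at hout
  have hic : a % k ∈ residueClass ℓ k (a % k) := by
    simp [(Nat.mod_le a k).trans_lt haℓ]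
  obtain ⟨j, hj, hji⟩ := exists_mem_ne (s := residueClass ℓ k (a % k)) (by omega) (a % k)
  have hjc := mem_residueClass.1 hj
  have hkj : k ≤ j := by
    by_contra! h
    exact hji (by rw [← hjc.2, Nat.mod_eq_of_lt h])
  have hkJ : k ∈ J := hJ.out (hout _ hic) (hout j hj) ⟨(Nat.mod_lt a hk).le, hkj⟩
  refine ⟨0, hk, k, residueClass_subset_residueGroup ?_, 0, residueClass_subset_residueGroup ?_,
    hkJ, h0⟩
  · simp [hkj.trans_lt hjc.1]
  · simp [hk.trans_le (hkj.trans hjc.1.le)]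

end ResidueGroup

namespace SimpleGraph

variable {V : Type*} {G : SimpleGraph V}

def leafSet (G : SimpleGraph V) : Set V := {v | (G.neighborSet v).ncard = 1}

def Subgraph.leafSet (H : G.Subgraph) : Set V := {v | (H.neighborSet v).ncard = 1}

theorem Subgraph.mem_leafSet_of_adj {H : G.Subgraph} {v w : V} (hv : v ∈ G.leafSet)
    (h : H.Adj v w) : v ∈ H.leafSet := by
  have hv : (G.neighborSet v).ncard = 1 := hv
  have hfin : (G.neighborSet v).Finite := Set.finite_of_ncard_ne_zero (by omega)
  have hle := Set.ncard_le_ncard (H.neighborSet_subset v) hfin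
  have hpos := (Set.ncard_pos (hfin.subset (H.neighborSet_subset v))).2 ⟨w, h⟩
  show (H.neighborSet v).ncard = 1
  omega

theorem ncard_leafSet_le_mul [Finite V] {k d : ℕ} (F : Fin k → G.Subgraph)
    (hF : ∀ i, (F i).leafSet.ncard ≤ d) (hcov : ∀ e ∈ G.edgeSet, ∃ i, e ∈ (F i).edgeSet) :
    G.leafSet.ncard ≤ k * d := by
  have hsub : G.leafSet ⊆ ⋃ i, (F i).leafSet := by
    intro v hv
    obtain ⟨w, hw⟩ := Set.nonempty_of_ncard_ne_zero (s := G.neighborSet v) (by rw [hv.out]; simp)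
    obtain ⟨i, hi⟩ := hcov s(v, w) hw
    exact Set.mem_iUnion.2 ⟨i, Subgraph.mem_leafSet_of_adj hv hi⟩
  calc G.leafSet.ncard ≤ (⋃ i, (F i).leafSet).ncard := Set.ncard_le_ncard hsub
    _ ≤ ∑ i, (F i).leafSet.ncard := Set.ncard_iUnion_le_of_fintype _
    _ ≤ ∑ _i : Fin k, d := sum_le_sum fun i _ => hF i
    _ = k * d := by simp

theorem Subgraph.connected_iSup {ι : Type*} [Nonempty ι] {H : ι → G.Subgraph} {v : V}
    (hH : ∀ i, (H i).Connected) (hv : ∀ i, v ∈ (H i).verts) : (⨆ i, H i).Connected := by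
  rw [Subgraph.connected_iff', connected_iff_exists_forall_reachable]
  refine ⟨⟨v, by simpa using ⟨Classical.arbitrary ι, hv _⟩⟩, fun ⟨w, hw⟩ => ?_⟩
  obtain ⟨i, hi⟩ := Set.mem_iUnion.1 (verts_iSup ▸ hw)
  exact ((hH i).preconnected ⟨v, hv i⟩ ⟨w, hi⟩).map (Subgraph.inclusion (le_iSup H i))

theorem Walk.IsPath.ncard_neighborSet_toSubgraph_eq_two_of_ne {u v w : V} {p : G.Walk u v}
    (hp : p.IsPath) (hw : w ∈ p.support) (hu : w ≠ u) (hv : w ≠ v) :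
    (p.toSubgraph.neighborSet w).ncard = 2 := by
  obtain ⟨i, rfl, hi⟩ := Walk.mem_support_iff_exists_getVert.1 hw
  refine hp.ncard_neighborSet_toSubgraph_internal_eq_two (fun h => hu ?_)
    (lt_of_le_of_ne hi fun h => hv ?_)
  · rw [h, Walk.getVert_zero]
  · rw [h, Walk.getVert_length]

namespace IsTree

variable (hT : G.IsTree)

noncomputable def path (u v : V) : G.Walk u v := (hT.existsUnique_path u v).exists.choose

theorem isPath_path (u v : V) : (hT.path u v).IsPath :=
  (hT.existsUnique_path u v).exists.choose_spec

theorem eq_path {u v : V} {p : G.Walk u v} (hp : p.IsPath) : p = hT.path u v :=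
  (hT.existsUnique_path u v).unique hp (hT.isPath_path u v)

theorem path_self (u : V) : hT.path u u = .nil := (hT.eq_path .nil).symm

theorem reverse_path (u v : V) : (hT.path u v).reverse = hT.path v u :=
  hT.eq_path (hT.isPath_path u v).reverse

theorem edges_path_subset (a b c : V) :
    (hT.path a b).edges ⊆ (hT.path c a).edges ++ (hT.path c b).edges := by
  classical
  rw [← hT.eq_path ((hT.path c a).reverse.append (hT.path c b)).bypass_isPath]
  intro e he
  simpa [Walk.edges_append, Walk.edges_reverse] using Walk.edges_bypass_subset_edges _ he

theorem mem_edges_path_of_not_mem {r x z : V} {e : Sym2 V} (hx : e ∈ (hT.path r x).edges)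
    (hz : e ∉ (hT.path r z).edges) : e ∈ (hT.path z x).edges := by
  rcases List.mem_append.1 (hT.edges_path_subset r x z hx) with h | h
  · rw [← hT.reverse_path, Walk.edges_reverse, List.mem_reverse] at h
    exact absurd h hz
  · exact h

theorem exists_mem_edges_path (r : V) {e : Sym2 V} (he : e ∈ G.edgeSet) :
    ∃ c ∈ e, e ∈ (hT.path r c).edges := by
  induction e with
  | _ u v =>
  have h : G.Adj u v := he
  by_cases hv : v ∈ (hT.path r u).support
  · refine ⟨u, Sym2.mem_mk_left u v, ?_⟩
    rw [hT.isAcyclic.path_concat (hT.isPath_path r v) (hT.isPath_path r u) h.symm hv,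
      Walk.edges_concat]
    simp [Sym2.eq_swap]
  · refine ⟨v, Sym2.mem_mk_right u v, ?_⟩
    rw [← hT.eq_path ((hT.isPath_path r u).concat hv h), Walk.edges_concat]
    simp

theorem isPrefix_support_path_iff {r c x : V} :
    (hT.path r c).support <+: (hT.path r x).support ↔ c ∈ (hT.path r x).support := by
  classical
  refine ⟨fun h => h.subset (Walk.end_mem_support _), fun hcx => ?_⟩
  rw [← hT.eq_path ((hT.isPath_path r x).takeUntil hcx)]
  exact Walk.support_takeUntil_prefix_support _ hcx

theorem mem_edges_path_iff {r c x : V} {e : Sym2 V} (hc : c ∈ e)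
    (he : e ∈ (hT.path r c).edges) : e ∈ (hT.path r x).edges ↔ c ∈ (hT.path r x).support := by
  classical
  refine ⟨fun hx => Walk.mem_support_of_mem_edges hx hc, fun hcx => ?_⟩
  rw [← hT.eq_path ((hT.isPath_path r x).takeUntil hcx)] at he
  exact Walk.edges_takeUntil_subset_edges _ hcx he

theorem support_path_injective (r : V) : Function.Injective fun x => (hT.path r x).support := by
  intro x y h
  rw [← (hT.path r x).getLast_support, ← (hT.path r y).getLast_support]
  simp only at h
  simp only [h]

theorem not_support_path_lt_support_path_self [LinearOrder V] (r x : V) :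
    ¬ (hT.path r x).support < (hT.path r r).support := by
  rw [path_self, Walk.support_nil, ← Walk.cons_tail_support, List.cons_lt_cons_iff]
  simp

theorem exists_mem_leafSet_mem_support_path [Finite V] {r c : V} (hc : c ≠ r) :
    ∃ x ∈ G.leafSet, c ∈ (hT.path r x).support := by
  -- the farthest vertex from `r` whose path from `r` passes through `c` is a leaf
  obtain ⟨x, hcx, hmax⟩ := Set.exists_max_image {x | c ∈ (hT.path r x).support}
    (fun x => (hT.path r x).length) (Set.toFinite _) ⟨c, Walk.end_mem_support _⟩
  have hcx : c ∈ (hT.path r x).support := hcx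
  have hxr : x ≠ r := by
    rintro rfl
    simp [path_self] at hcx
    exact hc hcx
  have hnbr : G.neighborSet x = {(hT.path r x).penultimate} := by
    ext z
    refine ⟨fun hz => ?_, fun hz => ?_⟩
    · have hz : G.Adj x z := hz
      have hzs : z ∈ (hT.path r x).support := by
        by_contra hzs
        have hp := hT.eq_path ((hT.isPath_path r x).concat hzs hz)
        have hle := hmax z (show c ∈ (hT.path r z).support by
          rw [← hp, Walk.support_concat]; simp [hcx])
        simp only [← hp, Walk.length_concat] at hle
        omega
      exact hT.isAcyclic.eq_penultimate_of_adj_end (hT.isPath_path r x) hz hzs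
    · rw [Set.mem_singleton_iff.1 hz]
      exact (Walk.adj_penultimate (Walk.not_nil_of_ne hxr.symm)).symm
  refine ⟨x, ?_, hcx⟩
  show (G.neighborSet x).ncard = 1
  rw [hnbr, Set.ncard_singleton]

noncomputable def pathsFrom (x₀ : V) (A : Set V) : G.Subgraph :=
  ⨆ a : A, (hT.path x₀ a).toSubgraph

theorem connected_pathsFrom {x₀ : V} {A : Set V} (hx₀ : x₀ ∈ A) :
    (hT.pathsFrom x₀ A).Connected :=
  haveI : Nonempty A := ⟨⟨x₀, hx₀⟩⟩
  Subgraph.connected_iSup (fun _ => Walk.toSubgraph_connected _)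
    (fun _ => Walk.start_mem_verts_toSubgraph _)

theorem toSubgraph_path_le_pathsFrom (x₀ : V) {A : Set V} {a : V} (ha : a ∈ A) :
    (hT.path x₀ a).toSubgraph ≤ hT.pathsFrom x₀ A :=
  le_iSup (fun a : A => (hT.path x₀ a).toSubgraph) ⟨a, ha⟩

theorem mem_edgeSet_pathsFrom (x₀ : V) {A : Set V} {a b : V} (ha : a ∈ A) (hb : b ∈ A)
    {e : Sym2 V} (he : e ∈ (hT.path a b).edges) : e ∈ (hT.pathsFrom x₀ A).edgeSet := by
  rcases List.mem_append.1 (hT.edges_path_subset a b x₀ he) with h | h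
  · exact Subgraph.edgeSet_mono (hT.toSubgraph_path_le_pathsFrom x₀ ha)
      ((Walk.mem_edges_toSubgraph _).2 h)
  · exact Subgraph.edgeSet_mono (hT.toSubgraph_path_le_pathsFrom x₀ hb)
      ((Walk.mem_edges_toSubgraph _).2 h)

theorem leafSet_pathsFrom_subset [Finite V] (x₀ : V) (A : Set V) :
    (hT.pathsFrom x₀ A).leafSet ⊆ insert x₀ A := by
  intro w hw
  have hw : ((hT.pathsFrom x₀ A).neighborSet w).ncard = 1 := hw
  by_contra hwA
  rw [Set.mem_insert_iff, not_or] at hwA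
  obtain ⟨y, hy⟩ := Set.nonempty_of_ncard_ne_zero (s := (hT.pathsFrom x₀ A).neighborSet w)
    (by omega)
  obtain ⟨⟨a, ha⟩, hay⟩ := Subgraph.iSup_adj.1 hy
  have hws : w ∈ (hT.path x₀ a).support := (Walk.mem_verts_toSubgraph _).1 hay.fst_mem
  have htwo := (hT.isPath_path x₀ a).ncard_neighborSet_toSubgraph_eq_two_of_ne hws hwA.1
    (by rintro rfl; exact hwA.2 ha)
  have hle := Set.ncard_le_ncard
    (Subgraph.neighborSet_subset_of_subgraph (hT.toSubgraph_path_le_pathsFrom x₀ ha) w)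
  omega

def IntervalListing (ℓ : ℕ) (f : ℕ → V) : Prop :=
  ∀ e ∈ G.edgeSet, ∃ J : Set ℕ, J.OrdConnected ∧ J.Nonempty ∧ J ⊆ Set.Iio ℓ ∧ 0 ∉ J ∧
    ∀ a ∈ J, ∀ b < ℓ, b ∉ J → e ∈ (hT.path (f b) (f a)).edges

theorem exists_intervalListing [Finite V] {r : V} (hr : r ∈ G.leafSet) :
    ∃ f, hT.IntervalListing G.leafSet.ncard f := by
  let : LinearOrder V := IsWellOrder.linearOrder WellOrderingRel
  have : Nonempty V := ⟨r⟩
  set ℓ := G.leafSet.ncard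
  set L := (Set.toFinite G.leafSet).toFinset
  have hL : #L = ℓ := (Set.ncard_eq_toFinset_card _ _).symm
  obtain ⟨f, hsurj, hmono⟩ :=
    L.exists_surjOn_strictMonoOn_comp _ (hT.support_path_injective r).injOn
  rw [hL] at hsurj hmono
  have hf0 : f 0 = r := by
    obtain ⟨j, hj, rfl⟩ := hsurj (Set.Finite.mem_toFinset _ |>.2 hr)
    refine (Nat.eq_zero_or_pos j).elim (fun h => h ▸ rfl) fun hj0 => absurd ?_
      (hT.not_support_path_lt_support_path_self (f j) (f 0))
    exact hmono (Set.mem_Iio.2 (hj0.trans hj)) hj hj0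
  refine ⟨f, fun e he => ?_⟩
  obtain ⟨c, hce, hec⟩ := hT.exists_mem_edges_path r he
  refine ⟨{j | j ∈ Set.Iio ℓ ∧ e ∈ (hT.path r (f j)).edges}, ?_, ?_, fun j hj => hj.1, ?_,
    fun a ha b hb hbJ => hT.mem_edges_path_of_not_mem ha.2 fun h => hbJ ⟨hb, h⟩⟩
  · simp_rw [hT.mem_edges_path_iff hce hec, ← hT.isPrefix_support_path_iff]
    exact hmono.ordConnected_setOf_isPrefix Set.ordConnected_Iio _
  · have hcr : c ≠ r := by
      rintro rfl
      simp [path_self] at hec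
    obtain ⟨x, hx, hcx⟩ := hT.exists_mem_leafSet_mem_support_path hcr
    obtain ⟨j, hj, rfl⟩ := hsurj (Set.Finite.mem_toFinset _ |>.2 hx)
    exact ⟨j, hj, (hT.mem_edges_path_iff hce hec).2 hcx⟩
  · rintro ⟨-, h⟩
    rw [hf0, path_self] at h
    simp at h

theorem exists_cover_of_intervalListing [Finite V] {ℓ k d : ℕ} {f : ℕ → V} (hd : 2 ≤ d)
    (hf : hT.IntervalListing ℓ f) (hℓ : ℓ ≤ k * d) :
    ∃ F : Fin k → G.Subgraph, (∀ i, (F i).Connected ∧ (F i).leafSet.ncard ≤ d) ∧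
      ∀ e ∈ G.edgeSet, ∃ i, e ∈ (F i).edgeSet := by
  let A : ℕ → Set V := fun i => f '' residueGroup ℓ k d i
  choose x hx using fun i => (coe_nonempty.2
    (residueGroup_nonempty (ℓ := ℓ) (k := k) (d := d) (i := i) (by omega))).image f
  refine ⟨fun i => hT.pathsFrom (x i) (A i), fun i => ⟨hT.connected_pathsFrom (hx i), ?_⟩, ?_⟩
  · calc (hT.pathsFrom (x i) (A i)).leafSet.ncard ≤ (insert (x i) (A i)).ncard :=
          Set.ncard_le_ncard (hT.leafSet_pathsFrom_subset _ _)
      _ = (A i).ncard := by rw [Set.insert_eq_of_mem (hx i)]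
      _ ≤ #(residueGroup ℓ k d i) :=
          (Set.ncard_image_le (Set.toFinite _)).trans (Set.ncard_coe_finset _).le
      _ ≤ d := card_residueGroup_le hℓ
  · intro e he
    obtain ⟨J, hJ, ⟨a, ha⟩, hJℓ, h0, hsep⟩ := hf e he
    have haℓ : a < ℓ := hJℓ ha
    have hk : 0 < k := Nat.pos_of_ne_zero fun hk => by
      rw [hk, zero_mul] at hℓ
      omega
    obtain ⟨i, hi, a, ha, b, hb, haJ, hbJ⟩ :=
      exists_residueGroup_mem_not_mem hd hk hJ hJℓ h0 ⟨a, ha⟩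
    have hbℓ : b < ℓ := lt_of_mem_residueGroup (by omega) hb
    exact ⟨⟨i, hi⟩, hT.mem_edgeSet_pathsFrom _ (Set.mem_image_of_mem f hb)
      (Set.mem_image_of_mem f ha) (hsep a haJ b hbℓ hbJ)⟩

end IsTree

end SimpleGraph

/-- For every integer `d ≥ 2` and tree `T` with `ℓ ≥ 2` leaves, the
minimum number of subtrees, each with at most `d` leaves, needed to cover the edge set
of `T` is exactly `⌈ℓ/d⌉`. -/
theorem minCover_fewLeaves_subtrees {V : Type*} [Fintype V] (G : SimpleGraph V)
    (hT : G.IsTree) (d : ℕ) (hd : 2 ≤ d) (ℓ : ℕ)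
    (hℓ : ℓ = {v : V | (G.neighborSet v).ncard = 1}.ncard) (hℓ2 : 2 ≤ ℓ) :
    IsLeast {k : ℕ | ∃ F : Fin k → G.Subgraph,
        (∀ i, (F i).Connected ∧
          ({v : V | ((F i).neighborSet v).ncard = 1}.ncard ≤ d)) ∧
        (∀ e ∈ G.edgeSet, ∃ i, e ∈ (F i).edgeSet)}
      ((ℓ + d - 1) / d) := by
  change ℓ = G.leafSet.ncard at hℓ
  obtain ⟨r, hr⟩ : G.leafSet.Nonempty := Set.nonempty_of_ncard_ne_zero (by omega)
  obtain ⟨f, hf⟩ := hT.exists_intervalListing hr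
  refine ⟨hT.exists_cover_of_intervalListing hd (hℓ ▸ hf) ?_, fun k ⟨F, hF, hcov⟩ => ?_⟩
  · have := Nat.lt_div_mul_add (a := ℓ + d - 1) (by omega : 0 < d)
    omega
  · have := SimpleGraph.ncard_leafSet_le_mul F (fun i => (hF i).2) hcov
    rw [Nat.div_le_iff_le_mul_add_pred (by omega), mul_comm]
    omega
end

section
/- Let f : V(G) → {2,3,4,…} be a binding function of a connected graph G, and let s be the minimum number of connected subgraphs X with deg_X(v) ≤ f(v) for all v ∈ V(X) that cover E(G). Then G has such a covering of size s in which the subgraphs are pairwise intersecting (any two share a vertex). -/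
/-!
Among the coverings by `s` connected `f`-bound subgraphs choose one with the largest total
number of vertices. Suppose two members `X`, `Y` are vertex-disjoint, and join them by a shortest
`X`–`Y` path `P`, from `a ∈ X` to `b ∈ Y`. Split `X` at `a` into connected pieces `K_X ∪ D_X = X`,
both through `a`, with `deg_{K_X} a < f a` and `deg_{D_X} a ≤ 1`: if `a` is saturated, delete an
edge `au`, keep the component of `a` and hand over the rest together with `au`. Split `Y` at `b`
likewise. Then `K_X ∪ P ∪ D_Y` and `K_Y ∪ P ∪ D_X` are connected and `f`-bound (`f ≥ 2` pays
for the inner vertices of `P` and for the far end), they cover `X ∪ Y`, and they have more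
vertices in total, since `a` and `b` are now counted twice.
-/

/-- A subgraph `X` of `G` is `f`-bound if every vertex of `X` has at most `f v`
neighbours in `X`. -/
def IsFBound {V : Type*} {G : SimpleGraph V} (H : G.Subgraph) (f : V → ℕ) : Prop :=
  ∀ v ∈ H.verts, (H.neighborSet v).ncard ≤ f v

namespace SimpleGraph

variable {V : Type*} {G : SimpleGraph V}

namespace Subgraph

lemma neighborSet_eq_empty_of_notMem {H : G.Subgraph} {v : V} (hv : v ∉ H.verts) :
    H.neighborSet v = ∅ :=
  Set.eq_empty_of_forall_notMem fun _ h => hv h.fst_mem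

lemma neighborSet_deleteEdges_singleton (H : G.Subgraph) (v u : V) :
    (H.deleteEdges {s(v, u)}).neighborSet v = H.neighborSet v \ {u} := by
  ext w
  simp only [mem_neighborSet, deleteEdges_adj, Set.mem_sdiff, Set.mem_singleton_iff, Sym2.eq_iff]
  grind

lemma deleteEdges_sup_subgraphOfAdj {X : G.Subgraph} {v u : V} (hvu : X.Adj v u) :
    X.deleteEdges {s(v, u)} ⊔ G.subgraphOfAdj hvu.adj_sub = X := by
  refine le_antisymm (sup_le (deleteEdges_le _) (subgraphOfAdj_le_of_adj X hvu))
    ⟨fun x hx => Or.inl hx, fun a b hab => ?_⟩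
  by_cases h : s(a, b) = s(v, u)
  exacts [Or.inr h.symm, Or.inl ⟨hab, h⟩]

lemma Connected.verts_subset_of_forall_adj {H : G.Subgraph} (hH : H.Connected) {S : Set V}
    {v : V} (hv : v ∈ H.verts) (hvS : v ∈ S) (hS : ∀ a b, H.Adj a b → a ∈ S → b ∈ S) :
    H.verts ⊆ S := by
  have hwalk : ∀ {a b : V} (p : G.Walk a b), p.toSubgraph ≤ H → a ∈ S → b ∈ S := by
    intro a b p
    induction p with
    | nil => exact fun _ h => h
    | cons h q ih =>
      intro hle ha
      rw [Walk.toSubgraph, sup_le_iff, subgraphOfAdj_le_iff] at hle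
      exact ih hle.2 (hS _ _ hle.1 ha)
  intro x hx
  obtain ⟨p, hp⟩ := ((connected_iff_forall_exists_walk_subgraph H).1 hH).2 hv hx
  exact hwalk p hp hvS

def componentOf (H : G.Subgraph) (v : V) : G.Subgraph :=
  sSup {K | K ≤ H ∧ K.Connected ∧ v ∈ K.verts}

lemma componentOf_le (H : G.Subgraph) (v : V) : H.componentOf v ≤ H :=
  sSup_le fun _ hK => hK.1

variable {H : G.Subgraph} {v : V}

lemma mem_componentOf (hv : v ∈ H.verts) : v ∈ (H.componentOf v).verts := by
  rw [componentOf, verts_sSup]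
  refine Set.mem_biUnion (x := G.singletonSubgraph v) ?_ (by simp)
  exact ⟨(G.singletonSubgraph_le_iff v H).2 hv, singletonSubgraph_connected, by simp⟩

lemma connected_componentOf (hv : v ∈ H.verts) : (H.componentOf v).Connected := by
  have hwalk : ∀ {x}, x ∈ (H.componentOf v).verts →
      ∃ p : G.Walk x v, p.toSubgraph ≤ H.componentOf v := by
    intro x hx
    rw [componentOf, verts_sSup, Set.mem_iUnion₂] at hx
    obtain ⟨K, hK, hxK⟩ := hx
    obtain ⟨p, hp⟩ := ((connected_iff_forall_exists_walk_subgraph K).1 hK.2.1).2 hxK hK.2.2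
    exact ⟨p, hp.trans (le_sSup hK)⟩
  refine (connected_iff_forall_exists_walk_subgraph _).2 ⟨⟨v, mem_componentOf hv⟩, ?_⟩
  intro x y hx hy
  obtain ⟨p, hp⟩ := hwalk hx
  obtain ⟨q, hq⟩ := hwalk hy
  refine ⟨p.append q.reverse, ?_⟩
  rw [Walk.toSubgraph_append, Walk.toSubgraph_reverse]
  exact sup_le hp hq

lemma le_componentOf (hv : v ∈ H.verts) {K : G.Subgraph} (hKH : K ≤ H) (hK : K.Connected)
    {x : V} (hxK : x ∈ K.verts) (hx : x ∈ (H.componentOf v).verts) : K ≤ H.componentOf v := by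
  have hconn : (K ⊔ H.componentOf v).Connected :=
    connected_sup hK.preconnected (connected_componentOf hv).preconnected ⟨x, hxK, hx⟩
  exact le_sup_left.trans <|
    le_sSup ⟨sup_le hKH (componentOf_le H v), hconn, Or.inr (mem_componentOf hv)⟩

lemma componentOf_adj (hv : v ∈ H.verts) {a b : V} (hab : H.Adj a b)
    (ha : a ∈ (H.componentOf v).verts) : (H.componentOf v).Adj a b :=
  (le_componentOf hv (subgraphOfAdj_le_of_adj H hab) (subgraphOfAdj_connected _) (by simp)
    ha).2 (by simp)

lemma le_componentOf_sup_componentOf {u : V} (hvu : G.Adj v u) (hv : v ∈ H.verts)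
    (hu : u ∈ H.verts) (hH : (H ⊔ G.subgraphOfAdj hvu).Connected) :
    H ≤ H.componentOf v ⊔ H.componentOf u := by
  have hadj : ∀ {a b}, H.Adj a b → a ∈ (H.componentOf v ⊔ H.componentOf u).verts →
      (H.componentOf v ⊔ H.componentOf u).Adj a b := by
    rintro a b hab (ha | ha)
    · exact Or.inl (componentOf_adj hv hab ha)
    · exact Or.inr (componentOf_adj hu hab ha)
  have hverts : H.verts ⊆ (H.componentOf v ⊔ H.componentOf u).verts := by
    refine subset_trans (fun x hx => Or.inl hx)
      (hH.verts_subset_of_forall_adj (Or.inl hv) (Or.inl (mem_componentOf hv)) ?_)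
    rintro a b (hab | hab) ha
    · exact (hadj hab ha).snd_mem
    · have hb : b ∈ ({v, u} : Set V) := hab.snd_mem
      rcases hb with rfl | rfl
      exacts [Or.inl (mem_componentOf hv), Or.inr (mem_componentOf hu)]
  exact ⟨hverts, fun a b hab => hadj hab (hverts hab.fst_mem)⟩

lemma Connected.exists_split_of_adj {X : G.Subgraph} (hX : X.Connected) {u : V}
    (hvu : X.Adj v u) :
    ∃ K D : G.Subgraph, K ⊔ D = X ∧ K.Connected ∧ D.Connected ∧ v ∈ K.verts ∧
      K.neighborSet v ⊆ X.neighborSet v \ {u} ∧ D.neighborSet v = {u} := by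
  set H := X.deleteEdges {s(v, u)}
  set e := G.subgraphOfAdj hvu.adj_sub
  have hv : v ∈ H.verts := hvu.fst_mem
  have hu : u ∈ H.verts := hvu.snd_mem
  have hHe : H ⊔ e = X := deleteEdges_sup_subgraphOfAdj hvu
  have hcover : X ≤ H.componentOf v ⊔ H.componentOf u ⊔ e := by
    rw [← hHe] at hX ⊢
    exact sup_le_sup_right (le_componentOf_sup_componentOf hvu.adj_sub hv hu hX) e
  have hCX : ∀ w, H.componentOf w ≤ X := fun w => (componentOf_le H w).trans (deleteEdges_le _)
  have hKv : (H.componentOf v).neighborSet v ⊆ X.neighborSet v \ {u} :=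
    neighborSet_deleteEdges_singleton X v u ▸ neighborSet_subset_of_subgraph (componentOf_le H v) v
  by_cases huv : u ∈ (H.componentOf v).verts
  · -- `vu` is not a bridge of `X`: `K` is `X` without `vu`, and `D` is the edge `vu`.
    have hCu : H.componentOf u ≤ H.componentOf v :=
      le_componentOf hv (componentOf_le H u) (connected_componentOf hu) (mem_componentOf hu) huv
    refine ⟨H.componentOf v, e, le_antisymm (sup_le (hCX v) (subgraphOfAdj_le_of_adj X hvu)) ?_,
      connected_componentOf hv, subgraphOfAdj_connected _, mem_componentOf hv, hKv,
      neighborSet_fst_subgraphOfAdj _⟩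
    exact hcover.trans (sup_le_sup_right (sup_le le_rfl hCu) e)
  · -- `vu` is a bridge of `X`: `D` is the side of `u` together with `vu`.
    have hvu' : v ∉ (H.componentOf u).verts := fun h => huv
      ((le_componentOf hv (componentOf_le H u) (connected_componentOf hu) h (mem_componentOf hv)).1
        (mem_componentOf hu))
    refine ⟨H.componentOf v, H.componentOf u ⊔ e, le_antisymm ?_ ?_, connected_componentOf hv,
      connected_sup (connected_componentOf hu).preconnected (subgraphOfAdj_connected _).preconnected
        ⟨u, mem_componentOf hu, by simp [e]⟩,
      mem_componentOf hv, hKv, ?_⟩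
    · exact sup_le (hCX v) (sup_le (hCX u) (subgraphOfAdj_le_of_adj X hvu))
    · rwa [← sup_assoc]
    · rw [neighborSet_sup, neighborSet_eq_empty_of_notMem hvu', Set.empty_union]
      exact neighborSet_fst_subgraphOfAdj _

variable [Finite V]

lemma ncard_verts_sup_lt {K D : G.Subgraph} (hK : v ∈ K.verts) (hD : v ∈ D.verts) :
    (K ⊔ D).verts.ncard < K.verts.ncard + D.verts.ncard :=
  Set.ncard_union_lt (h := Set.not_disjoint_iff.2 ⟨v, hK, hD⟩)

lemma ncard_verts_add_ncard_verts_le {K D Z : G.Subgraph} (hKD : Disjoint K.verts D.verts)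
    (hKZ : K ≤ Z) (hDZ : D ≤ Z) : K.verts.ncard + D.verts.ncard ≤ Z.verts.ncard :=
  Set.ncard_union_eq hKD ▸ Set.ncard_le_ncard (Set.union_subset hKZ.1 hDZ.1)

lemma Connected.exists_split {X : G.Subgraph} (hX : X.Connected) (hv : v ∈ X.verts) {k : ℕ}
    (hk : 0 < k) (hdeg : (X.neighborSet v).ncard ≤ k) :
    ∃ K D : G.Subgraph, K ⊔ D = X ∧ K.Connected ∧ D.Connected ∧ v ∈ K.verts ∧ v ∈ D.verts ∧
      (K.neighborSet v).ncard < k ∧ (D.neighborSet v).ncard ≤ 1 := by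
  rcases hdeg.lt_or_eq with hlt | heq
  · exact ⟨X, G.singletonSubgraph v, sup_eq_left.2 ((G.singletonSubgraph_le_iff v X).2 hv), hX,
      singletonSubgraph_connected, hv, by simp, hlt, by simp [neighborSet_singletonSubgraph]⟩
  obtain ⟨u, hu⟩ := Set.nonempty_of_ncard_ne_zero (heq ▸ hk.ne')
  obtain ⟨K, D, hKD, hK, hD, hvK, hKv, hDv⟩ := hX.exists_split_of_adj hu
  have hDvu : D.Adj v u := by rw [← mem_neighborSet, hDv]; rfl
  refine ⟨K, D, hKD, hK, hD, hvK, hDvu.fst_mem, ?_, by rw [hDv, Set.ncard_singleton]⟩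
  calc (K.neighborSet v).ncard ≤ (X.neighborSet v \ {u}).ncard := Set.ncard_le_ncard hKv
    _ < (X.neighborSet v).ncard := Set.ncard_sdiff_singleton_lt_of_mem hu
    _ = k := heq

end Subgraph

namespace Walk

variable {a b : V}

lemma ncard_neighborSet_toSubgraph_start_le_one {p : G.Walk a b} (hp : p.IsPath) :
    (p.toSubgraph.neighborSet a).ncard ≤ 1 := by
  cases p with
  | nil => simp [neighborSet_singletonSubgraph]
  | cons h q =>
    have hq : q.toSubgraph.neighborSet a = ∅ := Subgraph.neighborSet_eq_empty_of_notMem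
      (by rw [mem_verts_toSubgraph]; exact ((cons_isPath_iff h q).1 hp).2)
    simp [Walk.toSubgraph, Subgraph.neighborSet_sup, hq]

lemma ncard_neighborSet_toSubgraph_end_le_one {p : G.Walk a b} (hp : p.IsPath) :
    (p.toSubgraph.neighborSet b).ncard ≤ 1 := by
  simpa using ncard_neighborSet_toSubgraph_start_le_one hp.reverse

lemma ncard_neighborSet_toSubgraph_le_two {p : G.Walk a b} (hp : p.IsPath) (x : V) :
    (p.toSubgraph.neighborSet x).ncard ≤ 2 := by
  induction p with
  | nil => simp [neighborSet_singletonSubgraph]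
  | @cons a c b h q ih =>
    rw [cons_isPath_iff] at hp
    rw [Walk.toSubgraph, Subgraph.neighborSet_sup]
    refine (Set.ncard_union_le _ _).trans ?_
    by_cases hxa : x = a
    · subst hxa
      have hq : q.toSubgraph.neighborSet x = ∅ := Subgraph.neighborSet_eq_empty_of_notMem
        (by rw [mem_verts_toSubgraph]; exact hp.2)
      simp [hq]
    by_cases hxc : x = c
    · subst hxc
      have := ncard_neighborSet_toSubgraph_start_le_one hp.1
      simp only [neighborSet_snd_subgraphOfAdj, Set.ncard_singleton]
      omega
    · simpa [neighborSet_subgraphOfAdj_of_ne_of_ne h hxa hxc] using (ih hp.1).trans (by norm_num)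

end Walk

lemma Preconnected.exists_isPath_between (hG : G.Preconnected) {A B : Set V} (hA : A.Nonempty)
    (hB : B.Nonempty) :
    ∃ a ∈ A, ∃ b ∈ B, ∃ p : G.Walk a b, p.IsPath ∧
      (∀ x ∈ p.support, x ∈ A → x = a) ∧ (∀ x ∈ p.support, x ∈ B → x = b) := by
  classical
  have hex : ∃ n, ∃ a ∈ A, ∃ b ∈ B, ∃ p : G.Walk a b, p.length = n :=
    let ⟨a, ha⟩ := hA
    let ⟨b, hb⟩ := hB
    ⟨_, a, ha, b, hb, (hG a b).some, rfl⟩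
  obtain ⟨a, ha, b, hb, p, hp⟩ := Nat.find_spec hex
  have hmin : ∀ a' ∈ A, ∀ b' ∈ B, ∀ q : G.Walk a' b', p.bypass.length ≤ q.length :=
    fun a' ha' b' hb' q =>
      p.length_bypass_le_length.trans (hp ▸ Nat.find_min' hex ⟨a', ha', b', hb', q, rfl⟩)
  refine ⟨a, ha, b, hb, p.bypass, p.bypass_isPath, fun x hx hxA => ?_, fun x hx hxB => ?_⟩
  · have hlen := congrArg Walk.length (p.bypass.take_spec hx)
    have := hmin x hxA b hb (p.bypass.dropUntil x hx)
    rw [Walk.length_append] at hlen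
    exact (Walk.eq_of_length_eq_zero (p := p.bypass.takeUntil x hx) (by omega)).symm
  · have hlen := congrArg Walk.length (p.bypass.take_spec hx)
    have := hmin a ha x hxB (p.bypass.takeUntil x hx)
    rw [Walk.length_append] at hlen
    exact Walk.eq_of_length_eq_zero (p := p.bypass.dropUntil x hx) (by omega)

end SimpleGraph

open SimpleGraph Subgraph

section FBound

variable {V : Type*} {G : SimpleGraph V} {f : V → ℕ}

lemma IsFBound.ncard_neighborSet_le {X : G.Subgraph} (hX : IsFBound X f) (v : V) :
    (X.neighborSet v).ncard ≤ f v := by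
  by_cases hv : v ∈ X.verts
  · exact hX v hv
  · simp [neighborSet_eq_empty_of_notMem hv]

lemma connected_sup_toSubgraph_sup {K D : G.Subgraph} (hK : K.Connected) (hD : D.Connected)
    {a b : V} (p : G.Walk a b) (ha : a ∈ K.verts) (hb : b ∈ D.verts) :
    (K ⊔ p.toSubgraph ⊔ D).Connected :=
  connected_sup (connected_sup hK.preconnected p.toSubgraph_connected.preconnected
      ⟨a, ha, p.start_mem_verts_toSubgraph⟩).preconnected
    hD.preconnected ⟨b, Or.inr p.end_mem_verts_toSubgraph, hb⟩

variable [Finite V]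

lemma IsFBound.ncard_neighborSet_le_of_le {X K : G.Subgraph} (hX : IsFBound X f) (hKX : K ≤ X)
    (v : V) : (K.neighborSet v).ncard ≤ f v :=
  (Set.ncard_le_ncard (neighborSet_subset_of_subgraph hKX v)).trans (hX.ncard_neighborSet_le v)

lemma isFBound_sup_toSubgraph_sup (hf : ∀ v, 2 ≤ f v) {X Y K D : G.Subgraph}
    (hX : IsFBound X f) (hY : IsFBound Y f) (hXY : Disjoint X.verts Y.verts) (hKX : K ≤ X)
    (hDY : D ≤ Y) {a b : V} {p : G.Walk a b} (hp : p.IsPath)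
    (hpX : ∀ x ∈ p.support, x ∈ X.verts → x = a) (hpY : ∀ x ∈ p.support, x ∈ Y.verts → x = b)
    (hKa : (K.neighborSet a).ncard < f a) (hDb : (D.neighborSet b).ncard ≤ 1) :
    IsFBound (K ⊔ p.toSubgraph ⊔ D) f := by
  intro x _
  have hK0 : x ∉ X.verts → K.neighborSet x = ∅ := fun h =>
    neighborSet_eq_empty_of_notMem fun hK => h (hKX.1 hK)
  have hD0 : x ∉ Y.verts → D.neighborSet x = ∅ := fun h =>
    neighborSet_eq_empty_of_notMem fun hD => h (hDY.1 hD)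
  have hP0 : x ∉ p.support → p.toSubgraph.neighborSet x = ∅ := fun h =>
    neighborSet_eq_empty_of_notMem (by rwa [Walk.mem_verts_toSubgraph])
  have hPa := Walk.ncard_neighborSet_toSubgraph_start_le_one hp
  have hPb := Walk.ncard_neighborSet_toSubgraph_end_le_one hp
  have hPx := Walk.ncard_neighborSet_toSubgraph_le_two hp x
  have hKx := hX.ncard_neighborSet_le_of_le hKX x
  have hDx := hY.ncard_neighborSet_le_of_le hDY x
  have hfx := hf x
  rw [Subgraph.neighborSet_sup, Subgraph.neighborSet_sup]
  refine (Set.ncard_union_le _ _).trans ((Nat.add_le_add_right (Set.ncard_union_le _ _) _).trans ?_)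
  by_cases hxX : x ∈ X.verts
  · rw [hD0 (Set.disjoint_left.1 hXY hxX), Set.ncard_empty]
    by_cases hxa : x = a
    · subst hxa
      omega
    · rw [hP0 fun h => hxa (hpX x h hxX), Set.ncard_empty]
      omega
  rw [hK0 hxX, Set.ncard_empty]
  by_cases hxY : x ∈ Y.verts
  · by_cases hxb : x = b
    · subst hxb
      omega
    · rw [hP0 fun h => hxb (hpY x h hxY), Set.ncard_empty]
      omega
  · rw [hD0 hxY, Set.ncard_empty]
    omega

lemma exists_exchange (hG : G.Preconnected) (hf : ∀ v, 2 ≤ f v) {X Y : G.Subgraph}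
    (hXc : X.Connected) (hYc : Y.Connected) (hXb : IsFBound X f) (hYb : IsFBound Y f)
    (hXY : Disjoint X.verts Y.verts) :
    ∃ X' Y' : G.Subgraph, X'.Connected ∧ Y'.Connected ∧ IsFBound X' f ∧ IsFBound Y' f ∧
      X ⊔ Y ≤ X' ⊔ Y' ∧ X.verts.ncard + Y.verts.ncard < X'.verts.ncard + Y'.verts.ncard := by
  obtain ⟨a, ha, b, hb, p, hp, hpX, hpY⟩ := hG.exists_isPath_between hXc.nonempty hYc.nonempty
  obtain ⟨KX, DX, rfl, hKXc, hDXc, haK, haD, hKa, hDa⟩ :=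
    hXc.exists_split ha (by linarith [hf a]) (hXb.ncard_neighborSet_le a)
  obtain ⟨KY, DY, rfl, hKYc, hDYc, hbK, hbD, hKb, hDb⟩ :=
    hYc.exists_split hb (by linarith [hf b]) (hYb.ncard_neighborSet_le b)
  have hpY' : ∀ x ∈ p.reverse.support, x ∈ (KY ⊔ DY).verts → x = b := by
    simpa using hpY
  have hpX' : ∀ x ∈ p.reverse.support, x ∈ (KX ⊔ DX).verts → x = a := by
    simpa using hpX
  refine ⟨KX ⊔ p.toSubgraph ⊔ DY, KY ⊔ p.reverse.toSubgraph ⊔ DX,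
    connected_sup_toSubgraph_sup hKXc hDYc p haK hbD,
    connected_sup_toSubgraph_sup hKYc hDXc p.reverse hbK haD,
    isFBound_sup_toSubgraph_sup hf hXb hYb hXY le_sup_left le_sup_right hp hpX hpY hKa hDb,
    isFBound_sup_toSubgraph_sup hf hYb hXb hXY.symm le_sup_left le_sup_right hp.reverse hpY' hpX'
      hKb hDa, ?_, ?_⟩
  · exact sup_le
      (sup_le (le_sup_left.trans (le_sup_left.trans le_sup_left)) (le_sup_right.trans le_sup_right))
      (sup_le ((le_sup_left.trans le_sup_left).trans le_sup_right) (le_sup_right.trans le_sup_left))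
  · have hKXDY : Disjoint KX.verts DY.verts := hXY.mono (fun _ h => Or.inl h) (fun _ h => Or.inr h)
    have hKYDX : Disjoint KY.verts DX.verts :=
      hXY.symm.mono (fun _ h => Or.inl h) (fun _ h => Or.inr h)
    have := ncard_verts_sup_lt haK haD
    have := ncard_verts_sup_lt hbK hbD
    have := ncard_verts_add_ncard_verts_le hKXDY (le_sup_left.trans le_sup_left)
      (le_sup_right : DY ≤ KX ⊔ p.toSubgraph ⊔ DY)
    have := ncard_verts_add_ncard_verts_le hKYDX (le_sup_left.trans le_sup_left)
      (le_sup_right : DX ≤ KY ⊔ p.reverse.toSubgraph ⊔ DX)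
    omega

variable {ι : Type*}

def IsFBoundCovering (f : V → ℕ) (F : ι → G.Subgraph) : Prop :=
  (∀ i, (F i).Connected ∧ IsFBound (F i) f) ∧ ∀ e ∈ G.edgeSet, ∃ i, e ∈ (F i).edgeSet

lemma IsFBoundCovering.exists_sum_ncard_verts_lt [Fintype ι] [DecidableEq ι]
    (hG : G.Preconnected) (hf : ∀ v, 2 ≤ f v) {F : ι → G.Subgraph} (hF : IsFBoundCovering f F)
    {i j : ι} (hij : i ≠ j) (hdisj : Disjoint (F i).verts (F j).verts) :
    ∃ F' : ι → G.Subgraph, IsFBoundCovering f F' ∧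
      ∑ k, (F k).verts.ncard < ∑ k, (F' k).verts.ncard := by
  obtain ⟨X', Y', hX'c, hY'c, hX'b, hY'b, hle, hlt⟩ :=
    exists_exchange hG hf (hF.1 i).1 (hF.1 j).1 (hF.1 i).2 (hF.1 j).2 hdisj
  set F' := Function.update (Function.update F i X') j Y'
  have hF'i : F' i = X' := by simp [F', hij]
  have hF'j : F' j = Y' := by simp [F']
  have hF'k : ∀ k, k ≠ i → k ≠ j → F' k = F k := fun k hki hkj => by simp [F', hki, hkj]
  refine ⟨F', ⟨fun k => ?_, fun e he => ?_⟩, ?_⟩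
  · by_cases hki : k = i
    · subst hki; exact hF'i ▸ ⟨hX'c, hX'b⟩
    by_cases hkj : k = j
    · subst hkj; exact hF'j ▸ ⟨hY'c, hY'b⟩
    exact hF'k k hki hkj ▸ hF.1 k
  · obtain ⟨k, hk⟩ := hF.2 e he
    by_cases hkij : k = i ∨ k = j
    · have : e ∈ X'.edgeSet ∪ Y'.edgeSet := Subgraph.edgeSet_sup ▸ edgeSet_mono hle
        (by rcases hkij with rfl | rfl <;> simp [Subgraph.edgeSet_sup, hk])
      rcases this with h | h
      exacts [⟨i, hF'i ▸ h⟩, ⟨j, hF'j ▸ h⟩]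
    · rw [not_or] at hkij
      exact ⟨k, hF'k k hkij.1 hkij.2 ▸ hk⟩
  · have hsplit : ∀ g : ι → ℕ, ∑ k, g k = g i + g j + ∑ k ∈ Finset.univ \ {i, j}, g k :=
      fun g => by rw [← Finset.sum_sdiff (Finset.subset_univ {i, j}), Finset.sum_pair hij, add_comm]
    have hrest : ∑ k ∈ Finset.univ \ {i, j}, (F' k).verts.ncard =
        ∑ k ∈ Finset.univ \ {i, j}, (F k).verts.ncard := Finset.sum_congr rfl fun k hk => by
      simp only [Finset.mem_sdiff, Finset.mem_insert, Finset.mem_singleton, not_or] at hk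
      rw [hF'k k hk.2.1 hk.2.2]
    rw [hsplit, hsplit, hF'i, hF'j, hrest]
    omega

end FBound

/-- Let `f` be a binding function (`f v ≥ 2` everywhere) of a
connected graph `G`, and let `s` be the minimum number of connected `f`-bound
subgraphs needed to cover `E(G)`.  Then `G` has such a covering of size `s` whose
subgraphs are pairwise intersecting. -/
theorem minCover_pairwise_intersecting {V : Type*} [Fintype V] (G : SimpleGraph V)
    (hG : G.Connected) (f : V → ℕ) (hf : ∀ v, 2 ≤ f v) (s : ℕ)
    (hs : IsLeast {k : ℕ | ∃ F : Fin k → G.Subgraph,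
        (∀ i, (F i).Connected ∧ IsFBound (F i) f) ∧
        (∀ e ∈ G.edgeSet, ∃ i, e ∈ (F i).edgeSet)} s) :
    ∃ F : Fin s → G.Subgraph,
      (∀ i, (F i).Connected ∧ IsFBound (F i) f) ∧
      (∀ e ∈ G.edgeSet, ∃ i, e ∈ (F i).edgeSet) ∧
      ∀ i j, ((F i).verts ∩ (F j).verts).Nonempty := by
  obtain ⟨F, hF, hmax⟩ := Set.exists_max_image {F : Fin s → G.Subgraph | IsFBoundCovering f F}
    (fun F => ∑ i, (F i).verts.ncard) (Set.toFinite _) hs.1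
  refine ⟨F, hF.1, hF.2, fun i j => ?_⟩
  by_contra hij
  have hne : i ≠ j := by
    rintro rfl
    exact hij (by simpa using (hF.1 i).1.nonempty)
  obtain ⟨F', hF', hlt⟩ := hF.exists_sum_ncard_verts_lt hG.preconnected hf hne
    (Set.disjoint_iff_inter_eq_empty.2 (Set.not_nonempty_iff_eq_empty.1 hij))
  exact (hmax F' hF').not_gt hlt
end
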